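/- arXiv:1209.2287 — 3 statements merged into one kernel-verified Lean document; each statement's English description precedes it below -/
import Mathlib

section
/- Let h:[0,a]→[0,a] be strictly increasing, concave, C¹ with h(0)=0, h'(0)=1, and let g_1,...,g_n > 0. Define f_n(x) = g_n·h(g_{n-1}·h(···g_1·h(x)···)). Let x ∈ [0,a] and x_{-i} denote the intermediate iterate after n-i steps (so x_{-n}=x, x_0=f_n(x)). If a_h > 0 satisfies h'(y) ≥ exp(-a_h·y) for all y ∈ [0,a], then exp(-a_h·Σ_{i=1}^n x_{-i}) ≤ f_n'(x)/f_n'(0) ≤ 1, where f_n'(0) = g_1·g_2···g_n. -/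
/-
The chain rule writes `f_n'(x) / (g_1 ⋯ g_n)` as the product of the factors `h'(x_{-i})`.
Concavity together with `h'(0) = 1` gives `h' ≤ 1` on `[0, a]`, and the hypothesis
`h'(y) ≥ exp(-a_h y)` bounds each factor from below; multiplying turns the sum of the
exponents into `-a_h ∑ x_{-i}`.
-/

open Set Finset

/-- The `n`-fold composition `x ↦ g n * h (g (n-1) * h (⋯ g 1 * h x ⋯))`:
`iterComp h g k x` is the result after `k` steps (the iterate `x_{-(n-k)}` when
the total number of steps is `n`). -/
noncomputable def iterComp (h : ℝ → ℝ) (g : ℕ → ℝ) : ℕ → ℝ → ℝ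
  | 0, x => x
  | (k + 1), x => g (k + 1) * h (iterComp h g k x)

@[to_additive sum_Icc_one_eq_sum_range]
lemma Finset.prod_Icc_one_eq_prod_range {M : Type*} [CommMonoid M] (f : ℕ → M) (n : ℕ) :
    ∏ i ∈ Icc 1 n, f i = ∏ j ∈ range n, f (j + 1) := by
  rw [← Ico_add_one_right_eq_Icc, prod_Ico_eq_prod_range, add_tsub_cancel_right]
  simp only [add_comm 1]

lemma Finset.sum_Icc_one_sub_eq_sum_range {M : Type*} [AddCommMonoid M] (f : ℕ → M) (n : ℕ) :
    ∑ i ∈ Icc 1 n, f (n - i) = ∑ j ∈ range n, f j := by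
  rw [sum_Icc_one_eq_sum_range, ← sum_range_reflect f n]
  simp only [Nat.sub_sub, add_comm 1]

lemma ConcaveOn.le_of_hasDerivWithinAt_of_lt {S : Set ℝ} {f : ℝ → ℝ} {x y f'x f'y : ℝ}
    (hf : ConcaveOn ℝ S f) (hx : x ∈ S) (hy : y ∈ S) (hxy : x < y)
    (hfx : HasDerivWithinAt f f'x S x) (hfy : HasDerivWithinAt f f'y S y) : f'y ≤ f'x :=
  (hf.le_slope_of_hasDerivWithinAt hx hy hxy hfy).trans
    (hf.slope_le_of_hasDerivWithinAt hx hy hxy hfx)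

section iterComp

variable {h h' : ℝ → ℝ} {g : ℕ → ℝ} {s : Set ℝ}

lemma mapsTo_iterComp (hg : ∀ i, MapsTo (fun y => g i * h y) s s) (k : ℕ) :
    MapsTo (iterComp h g k) s s := by
  induction k with
  | zero => exact mapsTo_id s
  | succ k ih => exact (hg (k + 1)).comp ih

lemma hasDerivWithinAt_iterComp (hg : ∀ i, MapsTo (fun y => g i * h y) s s)
    (hh : ∀ y ∈ s, HasDerivWithinAt h (h' y) s y) {x : ℝ} (hx : x ∈ s) (k : ℕ) :
    HasDerivWithinAt (iterComp h g k)
      (∏ j ∈ range k, g (j + 1) * h' (iterComp h g j x)) s x := by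
  induction k with
  | zero => rw [prod_range_zero]; exact hasDerivWithinAt_id x s
  | succ k ih =>
    have hstep := ((hh _ (mapsTo_iterComp hg k hx)).comp x ih
      (mapsTo_iterComp hg k)).const_mul (g (k + 1))
    rw [prod_range_succ, mul_comm, mul_assoc]
    exact hstep

end iterComp

theorem stmt1_general (a : ℝ) (ha : 0 < a) (h h' : ℝ → ℝ)
    (hderiv : ∀ x ∈ Icc 0 a, HasDerivWithinAt h (h' x) (Icc 0 a) x)
    (hconc : ConcaveOn ℝ (Icc 0 a) h)
    (h'0 : h' 0 = 1)
    (g : ℕ → ℝ) (hg : ∀ i, 0 < g i)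
    (hginv : ∀ i, ∀ y ∈ Icc 0 a, g i * h y ∈ Icc 0 a)
    (a_h : ℝ)
    (hah : ∀ y ∈ Icc 0 a, Real.exp (-a_h * y) ≤ h' y)
    (n : ℕ) (x : ℝ) (hx : x ∈ Icc 0 a)
    (D : ℝ) (hD : HasDerivWithinAt (iterComp h g n) D (Icc 0 a) x) :
    Real.exp (-a_h * ∑ i ∈ Finset.Icc 1 n, iterComp h g (n - i) x) ≤
        D / ∏ i ∈ Finset.Icc 1 n, g i ∧
      D / ∏ i ∈ Finset.Icc 1 n, g i ≤ 1 := by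
  have hmem : ∀ j, iterComp h g j x ∈ Icc 0 a := fun j => mapsTo_iterComp hginv j hx
  have hratio : D / ∏ i ∈ Finset.Icc 1 n, g i = ∏ j ∈ range n, h' (iterComp h g j x) := by
    have hprod_pos : 0 < ∏ j ∈ range n, g (j + 1) := prod_pos fun j _ => hg (j + 1)
    rw [(uniqueDiffOn_Icc ha x hx).eq_deriv _ hD (hasDerivWithinAt_iterComp hginv hderiv hx n),
      prod_Icc_one_eq_prod_range, prod_mul_distrib]
    field_simp
  have h'_le_one : ∀ y ∈ Icc 0 a, h' y ≤ 1 := by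
    intro y hy
    rcases hy.1.eq_or_lt with rfl | hy_pos
    · exact h'0.le
    · exact h'0 ▸ hconc.le_of_hasDerivWithinAt_of_lt (left_mem_Icc.2 ha.le) hy hy_pos
        (hderiv 0 (left_mem_Icc.2 ha.le)) (hderiv y hy)
  rw [hratio, sum_Icc_one_sub_eq_sum_range (fun j => iterComp h g j x), mul_sum, Real.exp_sum]
  exact ⟨prod_le_prod (fun j _ => (Real.exp_pos _).le) fun j _ => hah _ (hmem j),
    prod_le_one (fun j _ => (Real.exp_pos _).le.trans (hah _ (hmem j)))
      fun j _ => h'_le_one _ (hmem j)⟩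

/-- Distortion bound for the composition of concave fibre maps:
`exp (-a_h * ∑_{i=1}^n x_{-i}) ≤ f_n'(x) / f_n'(0) ≤ 1`, where
`f_n'(0) = g 1 * ⋯ * g n` and `x_{-i} = iterComp h g (n-i) x`. -/
theorem stmt1 (a : ℝ) (ha : 0 < a) (h h' : ℝ → ℝ)
    (hderiv : ∀ x ∈ Icc 0 a, HasDerivWithinAt h (h' x) (Icc 0 a) x)
    (hmono : StrictMonoOn h (Icc 0 a))
    (hconc : ConcaveOn ℝ (Icc 0 a) h)
    (hmaps : MapsTo h (Icc 0 a) (Icc 0 a))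
    (h0 : h 0 = 0) (h'0 : h' 0 = 1)
    (g : ℕ → ℝ) (hg : ∀ i, 0 < g i)
    (hginv : ∀ i, ∀ y ∈ Icc 0 a, g i * h y ∈ Icc 0 a)
    (a_h : ℝ) (ha_h : 0 < a_h)
    (hah : ∀ y ∈ Icc 0 a, Real.exp (-a_h * y) ≤ h' y)
    (n : ℕ) (x : ℝ) (hx : x ∈ Icc 0 a)
    (D : ℝ) (hD : HasDerivWithinAt (iterComp h g n) D (Icc 0 a) x) :
    Real.exp (-a_h * ∑ i ∈ Finset.Icc 1 n, iterComp h g (n - i) x) ≤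
        D / ∏ i ∈ Finset.Icc 1 n, g i ∧
      D / ∏ i ∈ Finset.Icc 1 n, g i ≤ 1 :=
  stmt1_general a ha h h' hderiv hconc h'0 g hg hginv a_h hah n x hx D hD
end

section
/- Under the assumptions of the cohomology construction (log ĝ Hölder, uniformly contracted stable fibres with section ς of Π), the function b̂(θ) = Σ_{n≥0}(log ĝ(Ŝ^{-n}θ) − log ĝ(Ŝ^{-n}ςΠθ)) satisfies the coboundary identity log ĝ(θ) = log g(Πθ) + b̂(θ) − b̂(Ŝ^{-1}θ), where log g(Πθ) := log ĝ(ςΠθ) + Σ_{n=1}^∞(log ĝ(Ŝ^{-n}ςΠθ) − log ĝ(Ŝ^{-n+1}ςΠŜ^{-1}θ)); in particular the right-hand correction term depends only on Πθ. -/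
open Set Filter

/-! The terms of `b̂ θ` compare `ĝ` along the backward orbits of `θ` and of `ς Π θ`, which
converge to each other exponentially fast; since `log ĝ` is Hölder, the series converges
geometrically. Because `ς Π Ŝ⁻¹ θ = ς Π Ŝ⁻¹ ς Π θ`, the series defining `log g (Π θ)` is the
series of `b̂` at `Ŝ⁻¹ ς Π θ`, shifted by one. The coboundary identity is then a telescoping
rearrangement of these three absolutely convergent series. -/

lemma summable_sub_of_holder_of_dist_le_geometric {X : Type*} [PseudoMetricSpace X]
    {f : X → ℝ} {L α C r : ℝ} (hL : 0 ≤ L) (hα : 0 < α)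
    (hf : ∀ x y, |f x - f y| ≤ L * dist x y ^ α) (hC : 0 ≤ C) (hr₀ : 0 ≤ r) (hr₁ : r < 1)
    {x y : ℕ → X} (hxy : ∀ᶠ n in atTop, dist (x n) (y n) ≤ C * r ^ n) :
    Summable fun n => f (x n) - f (y n) := by
  have hrα : r ^ α < 1 := Real.rpow_lt_one hr₀ hr₁ hα
  refine .of_norm_bounded_eventually_nat
    ((summable_geometric_of_lt_one (Real.rpow_nonneg hr₀ α) hrα).mul_left (L * C ^ α)) ?_
  filter_upwards [hxy] with n hn
  calc ‖f (x n) - f (y n)‖ ≤ L * dist (x n) (y n) ^ α := hf _ _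
    _ ≤ L * (C * r ^ n) ^ α := by gcongr
    _ = L * C ^ α * (r ^ α) ^ n := by
      rw [Real.mul_rpow hC (pow_nonneg hr₀ n), Real.rpow_pow_comm hr₀]; ring

lemma tsum_sub_sub_tsum_succ_sub {u v w : ℕ → ℝ} (huv : Summable fun n => u n - v n)
    (hvw : Summable fun n => v (n + 1) - w n) :
    ∑' n, (u n - v n) - ∑' n, (u (n + 1) - w n) = u 0 - v 0 - ∑' n, (v (n + 1) - w n) := by
  have huv' : Summable fun n => u (n + 1) - v (n + 1) := (summable_nat_add_iff 1).mpr huv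
  have hsplit : ∑' n, (u (n + 1) - w n) =
      ∑' n, (u (n + 1) - v (n + 1)) + ∑' n, (v (n + 1) - w n) := by
    rw [← huv'.tsum_add hvw]
    simp only [sub_add_sub_cancel]
  rw [huv.tsum_eq_zero_add, hsplit]
  ring

theorem stmt7_general {Θ : Type*} [MetricSpace Θ]
    {T : Type*} (S : Θ ≃ Θ) (Pr : Θ → T) (ς : T → Θ) (Sfac : T → T)
    (hsec : ∀ t, Pr (ς t) = t)
    (hconj : ∀ θ, Pr (S.symm θ) = Sfac (Pr θ))
    (logg : Θ → ℝ)
    (L αexp : ℝ) (hL : 0 ≤ L) (hα : 0 < αexp)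
    (hHolder : ∀ x y : Θ, |logg x - logg y| ≤ L * dist x y ^ αexp)
    (C r : ℝ) (hC : 0 < C) (hr : r ∈ Ioo (0 : ℝ) 1)
    (hcontract : ∀ θ : Θ, ∀ n : ℕ, 0 < n →
      dist (S.symm^[n] θ) (S.symm^[n] (ς (Pr θ))) ≤ C * r ^ n)
    -- `b̂` is the (absolutely convergent) Sinai–Bowen series
    (b : Θ → ℝ)
    (hb : ∀ θ, b θ = ∑' n : ℕ, (logg (S.symm^[n] θ) - logg (S.symm^[n] (ς (Pr θ)))))
    -- the correction term `log g ∘ Pr`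
    (logG : Θ → ℝ)
    (hlogG : ∀ θ, logG θ = logg (ς (Pr θ)) +
      ∑' n : ℕ, (logg (S.symm^[n + 1] (ς (Pr θ))) - logg (S.symm^[n] (ς (Pr (S.symm θ)))))) :
    (∀ θ : Θ,
        Summable (fun n : ℕ => logg (S.symm^[n] θ) - logg (S.symm^[n] (ς (Pr θ)))) ∧
        Summable (fun n : ℕ =>
          logg (S.symm^[n + 1] (ς (Pr θ))) - logg (S.symm^[n] (ς (Pr (S.symm θ)))))) ∧
    (∀ θ : Θ, logg θ = logG θ + b θ - b (S.symm θ)) ∧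
    (∀ θ θ' : Θ, Pr θ = Pr θ' → logG θ = logG θ') := by
  have hb_summable : ∀ θ, Summable
      fun n => logg (S.symm^[n] θ) - logg (S.symm^[n] (ς (Pr θ))) := fun θ =>
    summable_sub_of_holder_of_dist_le_geometric hL hα hHolder hC.le hr.1.le hr.2
      (eventually_atTop.2 ⟨1, fun n hn => hcontract θ n hn⟩)
  have hfibre : ∀ θ, ς (Pr (S.symm (ς (Pr θ)))) = ς (Pr (S.symm θ)) := fun θ => by
    rw [hconj, hconj, hsec]
  have hlogG_summable : ∀ θ, Summable fun n =>
      logg (S.symm^[n + 1] (ς (Pr θ))) - logg (S.symm^[n] (ς (Pr (S.symm θ)))) := fun θ => by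
    simpa only [← Function.iterate_succ_apply, hfibre] using hb_summable (S.symm (ς (Pr θ)))
  refine ⟨fun θ => ⟨hb_summable θ, hlogG_summable θ⟩, fun θ => ?_, fun θ θ' h => ?_⟩
  · rw [add_sub_assoc, hlogG, hb, hb]
    simp only [← Function.iterate_succ_apply]
    rw [tsum_sub_sub_tsum_succ_sub (hb_summable θ) (hlogG_summable θ)]
    simp only [Function.iterate_zero_apply]
    ring
  · rw [hlogG, hlogG, h, hconj, hconj, h]

/-- Coboundary identity: with `b̂ θ = ∑_{n≥0} (log ĝ (Ŝ⁻ⁿ θ) − log ĝ (Ŝ⁻ⁿ ς Pr θ))` one has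
`log ĝ θ = log g (Pr θ) + b̂ θ − b̂ (Ŝ⁻¹ θ)` where
`log g (Pr θ) = log ĝ (ς Pr θ) + ∑_{n≥1} (log ĝ (Ŝ⁻ⁿ ς Pr θ) − log ĝ (Ŝ⁻ⁿ⁺¹ ς Pr Ŝ⁻¹ θ))`,
and the latter term depends only on `Pr θ`. -/
theorem stmt7 {Θ : Type*} [MetricSpace Θ] [CompactSpace Θ]
    {T : Type*} (S : Θ ≃ Θ) (Pr : Θ → T) (ς : T → Θ) (Sfac : T → T)
    (hsec : ∀ t, Pr (ς t) = t)
    (hconj : ∀ θ, Pr (S.symm θ) = Sfac (Pr θ))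
    (logg : Θ → ℝ)
    (L αexp : ℝ) (hL : 0 ≤ L) (hα : 0 < αexp)
    (hHolder : ∀ x y : Θ, |logg x - logg y| ≤ L * dist x y ^ αexp)
    (C r : ℝ) (hC : 0 < C) (hr : r ∈ Ioo (0 : ℝ) 1)
    (hcontract : ∀ θ : Θ, ∀ n : ℕ, 0 < n →
      dist (S.symm^[n] θ) (S.symm^[n] (ς (Pr θ))) ≤ C * r ^ n)
    -- `b̂` is the (absolutely convergent) Sinai–Bowen series
    (b : Θ → ℝ)
    (hb : ∀ θ, b θ = ∑' n : ℕ, (logg (S.symm^[n] θ) - logg (S.symm^[n] (ς (Pr θ)))))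
    -- the correction term `log g ∘ Pr`
    (logG : Θ → ℝ)
    (hlogG : ∀ θ, logG θ = logg (ς (Pr θ)) +
      ∑' n : ℕ, (logg (S.symm^[n + 1] (ς (Pr θ))) - logg (S.symm^[n] (ς (Pr (S.symm θ)))))) :
    (∀ θ : Θ,
        Summable (fun n : ℕ => logg (S.symm^[n] θ) - logg (S.symm^[n] (ς (Pr θ)))) ∧
        Summable (fun n : ℕ =>
          logg (S.symm^[n + 1] (ς (Pr θ))) - logg (S.symm^[n] (ς (Pr (S.symm θ)))))) ∧
    (∀ θ : Θ, logg θ = logG θ + b θ - b (S.symm θ)) ∧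
    (∀ θ θ' : Θ, Pr θ = Pr θ' → logG θ = logG θ') :=
  stmt7_general S Pr ς Sfac hsec hconj logg L αexp hL hα hHolder C r hC hr hcontract b hb logG hlogG
end

section
/- Let φ̂_∞ and φ_∞∘Π be the maximal invariant graphs of the skew products with fibre maps x↦ĝ(θ)h(x) and x↦g(Πθ)h(x) respectively, where log ĝ = log g∘Π + b̂ − b̂∘Ŝ^{-1} with ‖b̂‖_∞ < ∞. Then for each θ: φ̂_∞(θ) > 0 if and only if φ_∞(Πθ) > 0, and in that case |log φ̂_∞(θ) − log φ_∞(Πθ)| ≤ log(a/h(a)) + 2‖b̂‖_∞. -/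
open Set Filter Topology

/-- The pullback fibre iterates `φ n θ = F^n_{Ŝ⁻ⁿ θ} a` of the skew product
`F (θ, x) = (Ŝ θ, ĝ θ * h x)`. -/
noncomputable def pullbackIter {Θ : Type*} (Sinv : Θ → Θ) (g : Θ → ℝ) (h : ℝ → ℝ)
    (a : ℝ) : ℕ → Θ → ℝ
  | 0, _ => a
  | (n + 1), θ => g (Sinv θ) * h (pullbackIter Sinv g h a n (Sinv θ))

lemma pullbackIter_mem_Icc {Θ : Type*} (Sinv : Θ → Θ) (g : Θ → ℝ) (h : ℝ → ℝ)
    {a : ℝ} (ha : 0 ≤ a) (hrange : ∀ θ, ∀ x ∈ Icc 0 a, g θ * h x ∈ Icc 0 a) :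
    ∀ n θ, pullbackIter Sinv g h a n θ ∈ Icc 0 a := by
  intro n
  induction n with
  | zero => intro θ; exact ⟨ha, le_rfl⟩
  | succ n ih =>
      intro θ
      exact hrange (Sinv θ) _ (ih (Sinv θ))

lemma concave_scale {a : ℝ} (ha : 0 < a) {h : ℝ → ℝ}
    (hconc : ConcaveOn ℝ (Icc 0 a) h) (h0 : h 0 = 0) :
    ∀ c, 0 ≤ c → c ≤ 1 → ∀ x ∈ Icc 0 a, c * h x ≤ h (c * x) := by
  intro c hc hc1 x hx
  have h0mem : (0 : ℝ) ∈ Icc 0 a := ⟨le_rfl, ha.le⟩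
  have := hconc.2 h0mem hx (by linarith : (0:ℝ) ≤ 1 - c) hc (by ring)
  simpa [h0, smul_eq_mul] using this

/-- Key sandwich lemma: if `g₁ = exp(b − b∘S⁻¹) ⬝ g₂`, then for `n ≥ 1` the
pullback iterates satisfy `exp(b(S⁻¹θ) − B) φ^{g₂}_n(θ) ≤ φ^{g₁}_n(θ)`. -/
lemma pullbackIter_sandwich {Θ : Type*} (S : Θ ≃ Θ) {a : ℝ} (ha : 0 < a)
    {h : ℝ → ℝ} (hmono : StrictMonoOn h (Icc 0 a))
    (hconc : ConcaveOn ℝ (Icc 0 a) h) (h0 : h 0 = 0)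
    (g1 g2 : Θ → ℝ) (hg2 : ∀ θ, 0 < g2 θ)
    (hrange1 : ∀ θ, ∀ x ∈ Icc 0 a, g1 θ * h x ∈ Icc 0 a)
    (hrange2 : ∀ θ, ∀ x ∈ Icc 0 a, g2 θ * h x ∈ Icc 0 a)
    (b : Θ → ℝ) (B : ℝ) (hB : ∀ θ, |b θ| ≤ B)
    (hcob : ∀ θ, g1 θ = Real.exp (b θ - b (S.symm θ)) * g2 θ) :
    ∀ n θ, Real.exp (b (S.symm θ) - B) * pullbackIter S.symm g2 h a (n+1) θ ≤
      pullbackIter S.symm g1 h a (n+1) θ := by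
  have hmonoOn : MonotoneOn h (Icc 0 a) := hmono.monotoneOn
  have hhnonneg : ∀ x ∈ Icc 0 a, 0 ≤ h x := by
    intro x hx
    rw [← h0]
    exact hmonoOn ⟨le_rfl, ha.le⟩ hx hx.1
  have hcle : ∀ θ : Θ, Real.exp (b θ - B) ≤ 1 := by
    intro θ
    rw [← Real.exp_zero]
    exact Real.exp_le_exp.2 (by have := (abs_le.1 (hB θ)).2; linarith)
  intro n
  induction n with
  | zero =>
      intro θ
      set σ := S.symm θ
      show Real.exp (b σ - B) * (g2 σ * h a) ≤ g1 σ * h a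
      rw [hcob σ]
      have h1 : Real.exp (b σ - B) ≤ Real.exp (b σ - b (S.symm σ)) :=
        Real.exp_le_exp.2 (by have := (abs_le.1 (hB (S.symm σ))).2; linarith)
      have h2 : 0 ≤ g2 σ * h a :=
        mul_nonneg (hg2 σ).le (hhnonneg a ⟨ha.le, le_rfl⟩)
      calc Real.exp (b σ - B) * (g2 σ * h a)
          ≤ Real.exp (b σ - b (S.symm σ)) * (g2 σ * h a) :=
            mul_le_mul_of_nonneg_right h1 h2
        _ = Real.exp (b σ - b (S.symm σ)) * g2 σ * h a := by ring
  | succ n ih =>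
      intro θ
      set σ := S.symm θ with hσ
      have hmem2 : pullbackIter S.symm g2 h a (n+1) σ ∈ Icc 0 a :=
        pullbackIter_mem_Icc S.symm g2 h ha.le hrange2 (n+1) σ
      have hmem1 : pullbackIter S.symm g1 h a (n+1) σ ∈ Icc 0 a :=
        pullbackIter_mem_Icc S.symm g1 h ha.le hrange1 (n+1) σ
      set c := Real.exp (b (S.symm σ) - B) with hc
      have hc0 : 0 < c := Real.exp_pos _
      have hc1 : c ≤ 1 := hcle _
      have hscaled_mem : c * pullbackIter S.symm g2 h a (n+1) σ ∈ Icc 0 a := by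
        constructor
        · exact mul_nonneg hc0.le hmem2.1
        · calc c * pullbackIter S.symm g2 h a (n+1) σ
              ≤ 1 * pullbackIter S.symm g2 h a (n+1) σ :=
                mul_le_mul_of_nonneg_right hc1 hmem2.1
            _ = pullbackIter S.symm g2 h a (n+1) σ := one_mul _
            _ ≤ a := hmem2.2
      have step1 : c * h (pullbackIter S.symm g2 h a (n+1) σ) ≤
          h (c * pullbackIter S.symm g2 h a (n+1) σ) :=
        concave_scale ha hconc h0 c hc0.le hc1 _ hmem2
      have step2 : h (c * pullbackIter S.symm g2 h a (n+1) σ) ≤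
          h (pullbackIter S.symm g1 h a (n+1) σ) :=
        hmonoOn hscaled_mem hmem1 (ih σ)
      show Real.exp (b σ - B) * (g2 σ * h (pullbackIter S.symm g2 h a (n+1) σ)) ≤
        g1 σ * h (pullbackIter S.symm g1 h a (n+1) σ)
      rw [hcob σ]
      have key : c * h (pullbackIter S.symm g2 h a (n+1) σ) ≤
          h (pullbackIter S.symm g1 h a (n+1) σ) := step1.trans step2
      have hg2pos := hg2 σ
      have hexp : Real.exp (b σ - B) =
          Real.exp (b σ - b (S.symm σ)) * c := by
        rw [hc, ← Real.exp_add]; ring_nf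
      calc Real.exp (b σ - B) * (g2 σ * h (pullbackIter S.symm g2 h a (n+1) σ))
          = Real.exp (b σ - b (S.symm σ)) * g2 σ *
              (c * h (pullbackIter S.symm g2 h a (n+1) σ)) := by rw [hexp]; ring
        _ ≤ Real.exp (b σ - b (S.symm σ)) * g2 σ *
              h (pullbackIter S.symm g1 h a (n+1) σ) := by
            apply mul_le_mul_of_nonneg_left key
            positivity

/-- Comparison of the invariant graphs `φ̂_∞` (multiplier `ĝ`) and `φ_∞ ∘ Pr`
(multiplier `g ∘ Pr`), when `log ĝ = log (g ∘ Pr) + b̂ − b̂ ∘ Ŝ⁻¹` with `‖b̂‖_∞ ≤ B`: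
`φ̂_∞ θ > 0 ↔ φ_∞ (Pr θ) > 0`, and in that case
`|log φ̂_∞ θ − log φ_∞ (Pr θ)| ≤ log (a / h a) + 2 B`. -/
theorem stmt8 {Θ : Type*} (S : Θ ≃ Θ) (a : ℝ) (ha : 0 < a)
    (h h' : ℝ → ℝ)
    (hderiv : ∀ x ∈ Icc 0 a, HasDerivWithinAt h (h' x) (Icc 0 a) x)
    (hmono : StrictMonoOn h (Icc 0 a))
    (hconc : ConcaveOn ℝ (Icc 0 a) h)
    (h0 : h 0 = 0) (h'0 : h' 0 = 1)
    (ghat gP : Θ → ℝ) (hghat : ∀ θ, 0 < ghat θ) (hgP : ∀ θ, 0 < gP θ)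
    (hrange1 : ∀ θ, ∀ x ∈ Icc 0 a, ghat θ * h x ∈ Icc 0 a)
    (hrange2 : ∀ θ, ∀ x ∈ Icc 0 a, gP θ * h x ∈ Icc 0 a)
    (b : Θ → ℝ) (B : ℝ) (hB : ∀ θ, |b θ| ≤ B)
    -- the coboundary relation `log ĝ = log (g ∘ Pr) + b̂ − b̂ ∘ Ŝ⁻¹`
    (hcob : ∀ θ, Real.log (ghat θ) = Real.log (gP θ) + b θ - b (S.symm θ)) :
    ∀ θ : Θ,
      ((0 < ⨅ n : ℕ, pullbackIter S.symm ghat h a n θ) ↔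
        (0 < ⨅ n : ℕ, pullbackIter S.symm gP h a n θ)) ∧
      ((0 < ⨅ n : ℕ, pullbackIter S.symm ghat h a n θ) →
        |Real.log (⨅ n : ℕ, pullbackIter S.symm ghat h a n θ) -
            Real.log (⨅ n : ℕ, pullbackIter S.symm gP h a n θ)| ≤
          Real.log (a / h a) + 2 * B) := by
  -- multiplicative coboundary, both directions
  have hcobmul1 : ∀ θ, ghat θ = Real.exp (b θ - b (S.symm θ)) * gP θ := by
    intro θ
    have := congrArg Real.exp (hcob θ)
    rw [Real.exp_log (hghat θ)] at this
    rw [this, show Real.log (gP θ) + b θ - b (S.symm θ) =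
      (b θ - b (S.symm θ)) + Real.log (gP θ) by ring, Real.exp_add,
      Real.exp_log (hgP θ)]
  have hcobmul2 : ∀ θ, gP θ = Real.exp ((-b) θ - (-b) (S.symm θ)) * ghat θ := by
    intro θ
    rw [hcobmul1 θ]
    simp only [Pi.neg_apply]
    rw [← mul_assoc, ← Real.exp_add]
    norm_num
  have hBneg : ∀ θ, |(-b) θ| ≤ B := by intro θ; simpa [abs_neg] using hB θ
  -- the two sandwich inequalities
  have sand1 := pullbackIter_sandwich S ha hmono hconc h0 ghat gP hgP
    hrange1 hrange2 b B hB hcobmul1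
  have sand2 := pullbackIter_sandwich S ha hmono hconc h0 gP ghat hghat
    hrange2 hrange1 (-b) B hBneg hcobmul2
  -- h a > 0 and h a ≤ a
  have haIcc : a ∈ Icc (0:ℝ) a := ⟨ha.le, le_rfl⟩
  have h0Icc : (0:ℝ) ∈ Icc (0:ℝ) a := ⟨le_rfl, ha.le⟩
  have hha_pos : 0 < h a := by
    have := hmono h0Icc haIcc ha
    rwa [h0] at this
  have hha_le : h a ≤ a := by
    -- slope bound from concavity, plus derivative 1 at 0
    have hslope : ∀ x ∈ Ioc (0:ℝ) a, h a / a ≤ slope h 0 x := by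
      intro x hx
      have hxa : x / a ∈ Icc (0:ℝ) 1 :=
        ⟨div_nonneg hx.1.le ha.le, div_le_one_of_le₀ hx.2 ha.le⟩
      have := concave_scale ha hconc h0 (x / a) hxa.1 hxa.2 a haIcc
      rw [div_mul_cancel₀ _ ha.ne'] at this
      rw [slope_def_field, h0, sub_zero, sub_zero, div_le_div_iff₀ ha hx.1]
      rw [div_mul_eq_mul_div, div_le_iff₀ ha] at this
      linarith
    have hlim : Tendsto (slope h 0) (𝓝[Icc 0 a \ {0}] (0:ℝ)) (𝓝 1) := by
      have := (hasDerivWithinAt_iff_tendsto_slope).1 (hderiv 0 h0Icc)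
      rwa [h'0] at this
    rw [Icc_diff_left] at hlim
    have hne : (𝓝[Ioc (0:ℝ) a] (0:ℝ)).NeBot := left_nhdsWithin_Ioc_neBot ha
    have hev : ∀ᶠ x in 𝓝[Ioc (0:ℝ) a] (0:ℝ), h a / a ≤ slope h 0 x :=
      eventually_nhdsWithin_of_forall hslope
    have := ge_of_tendsto hlim hev
    rwa [div_le_one ha] at this
  have hLnonneg : 0 ≤ Real.log (a / h a) :=
    Real.log_nonneg ((one_le_div hha_pos).2 hha_le)
  intro θ
  set σ := S.symm θ with hσ
  set f : ℕ → ℝ := fun n => pullbackIter S.symm ghat h a n θ with hf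
  set k : ℕ → ℝ := fun n => pullbackIter S.symm gP h a n θ with hk
  have hfmem : ∀ n, f n ∈ Icc 0 a :=
    fun n => pullbackIter_mem_Icc S.symm ghat h ha.le hrange1 n θ
  have hkmem : ∀ n, k n ∈ Icc 0 a :=
    fun n => pullbackIter_mem_Icc S.symm gP h ha.le hrange2 n θ
  have hfbdd : BddBelow (Set.range f) := ⟨0, by rintro _ ⟨n, rfl⟩; exact (hfmem n).1⟩
  have hkbdd : BddBelow (Set.range k) := ⟨0, by rintro _ ⟨n, rfl⟩; exact (hkmem n).1⟩
  set If : ℝ := ⨅ n, f n with hIf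
  set Ik : ℝ := ⨅ n, k n with hIk
  have hIf0 : 0 ≤ If := le_ciInf fun n => (hfmem n).1
  have hIk0 : 0 ≤ Ik := le_ciInf fun n => (hkmem n).1
  have hIfa : If ≤ a := ciInf_le hfbdd 0
  have hIka : Ik ≤ a := ciInf_le hkbdd 0
  have hBnn : 0 ≤ B := (abs_nonneg _).trans (hB θ)
  set c := Real.exp (b σ - B) with hc
  set c' := Real.exp ((-b) σ - B) with hc'
  have hc0 : 0 < c := Real.exp_pos _
  have hc'0 : 0 < c' := Real.exp_pos _
  have hc1 : c ≤ 1 := by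
    rw [hc, ← Real.exp_zero]
    exact Real.exp_le_exp.2 (by have := (abs_le.1 (hB σ)).2; linarith)
  have hc'1 : c' ≤ 1 := by
    rw [hc', ← Real.exp_zero]
    have := (abs_le.1 (hB σ)).1
    exact Real.exp_le_exp.2 (by simp only [Pi.neg_apply]; linarith)
  -- sandwich for the infima
  have key1 : c * Ik ≤ If := by
    apply le_ciInf
    intro n
    cases n with
    | zero =>
        have : c * Ik ≤ Ik := by
          nlinarith
        exact this.trans (le_trans hIka (le_of_eq rfl))
    | succ n =>
        calc c * Ik ≤ c * k (n+1) :=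
              mul_le_mul_of_nonneg_left (ciInf_le hkbdd (n+1)) hc0.le
          _ ≤ f (n+1) := sand1 n θ
  have key2 : c' * If ≤ Ik := by
    apply le_ciInf
    intro n
    cases n with
    | zero =>
        have : c' * If ≤ If := by nlinarith
        exact this.trans hIfa
    | succ n =>
        calc c' * If ≤ c' * f (n+1) :=
              mul_le_mul_of_nonneg_left (ciInf_le hfbdd (n+1)) hc'0.le
          _ ≤ k (n+1) := sand2 n θ
  have hiff : (0 < If) ↔ (0 < Ik) := by
    constructor
    · intro hpos
      exact lt_of_lt_of_le (by positivity) key2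
    · intro hpos
      exact lt_of_lt_of_le (by positivity) key1
  refine ⟨hiff, ?_⟩
  intro hIfpos
  have hIkpos : 0 < Ik := hiff.1 hIfpos
  have hlog1 : b σ - B + Real.log Ik ≤ Real.log If := by
    have := Real.log_le_log (by positivity) key1
    rwa [Real.log_mul hc0.ne' hIkpos.ne', hc, Real.log_exp] at this
  have hlog2 : (-b) σ - B + Real.log If ≤ Real.log Ik := by
    have := Real.log_le_log (by positivity) key2
    rwa [Real.log_mul hc'0.ne' hIfpos.ne', hc', Real.log_exp] at this
  have hb := abs_le.1 (hB σ)
  rw [abs_le]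
  constructor
  · have : -(2*B) ≤ Real.log If - Real.log Ik := by
      have := hlog1; simp only [Pi.neg_apply] at hlog2 ⊢; linarith
    linarith
  · have : Real.log If - Real.log Ik ≤ 2*B := by
      simp only [Pi.neg_apply] at hlog2; linarith
    linarith
end
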